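/- Let I be a quasi-forest and let ρ be a path in I from a root a realizing an NFA A from state q to state q'. Then the subsequence of ρ consisting of all its root elements, say a = d₁, d₂, …, d_m, together with intermediate states q = q₁, q₂, …, q_{m+1} = q' chosen from any accepting run of A on ρ, has the property that each consecutive segment of ρ between d_j and d_{j+1} is a path with unnamed interior realizing A from q_j to q_{j+1}, and any trailing segment after d_m (if ρ does not end at a root) is an a'-inner path realizing A from q_m to q' for the root a' whose subtree contains it. -/

import Mathlib

def NForest (F : Set (List ℕ)) : Prop :=
  (∀ w ∈ F, w ≠ []) ∧ ∀ w ∈ F, ∀ u : List ℕ, u ≠ [] → u <+: w → u ∈ F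

def StrictPrefix (u w : List ℕ) : Prop := u <+: w ∧ u ≠ w

def RootsSet (F : Set (List ℕ)) : Set (List ℕ) := {w ∈ F | w.length = 1}

def IsChild (d e : List ℕ) : Prop := ∃ n : ℕ, e = d ++ [n]

def EdgeCond (F O : Set (List ℕ)) (E : List ℕ → List ℕ → Prop) : Prop :=
  ∀ d e, d ∈ F → e ∈ F → E d e →
    (d ∈ RootsSet F ∧ e ∈ RootsSet F) ∨ d ∈ O ∨ e ∈ O ∨ d = e ∨
      IsChild d e ∨ IsChild e d

/-!
The cut points are the root positions of `ρ` in increasing order. The only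
geometric content is in the trailing segment: since edges at named elements
start or end at a root, an edge between two non-root elements joins an element
to itself, a child or its parent, and so preserves the first letter. Hence all
elements after the last root lie strictly below the root given by that letter.
-/

section Enumeration

variable {α : Type*} [LinearOrder α] {m : ℕ} {f : Fin (m + 1) → α} {x : α}

lemma StrictMono.notMem_range_of_lt_of_lt (hf : StrictMono f) (j : Fin m)
    (hlo : f j.castSucc < x) (hhi : x < f j.succ) : x ∉ Set.range f := by
  rintro ⟨j', rfl⟩
  have h₁ := hf.lt_iff_lt.1 hlo
  have h₂ := hf.lt_iff_lt.1 hhi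
  rw [Fin.lt_def, Fin.val_castSucc] at h₁
  rw [Fin.lt_def, Fin.val_succ] at h₂
  omega

lemma Monotone.notMem_range_of_last_lt (hf : Monotone f) (h : f (Fin.last m) < x) :
    x ∉ Set.range f := by
  rintro ⟨j, rfl⟩
  exact (hf (Fin.le_last j)).not_gt h

end Enumeration

section QuasiForest

variable {F O : Set (List ℕ)}

lemma NForest.take_one_mem_rootsSet (hF : NForest F) {w : List ℕ} (hw : w ∈ F) :
    w.take 1 ∈ RootsSet F := by
  obtain ⟨x, w, rfl⟩ := List.exists_cons_of_ne_nil (hF.1 w hw)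
  exact ⟨hF.2 _ hw [x] (List.cons_ne_nil x []) (List.take_prefix 1 (x :: w)), rfl⟩

lemma NForest.strictPrefix_take_one (hF : NForest F) {w : List ℕ} (hw : w ∈ F)
    (hwr : w ∉ RootsSet F) : StrictPrefix (w.take 1) w :=
  ⟨List.take_prefix 1 w, fun h => hwr (h ▸ hF.take_one_mem_rootsSet hw)⟩

lemma IsChild.take_one_eq {d e : List ℕ} (hd : d ≠ []) (h : IsChild d e) :
    e.take 1 = d.take 1 := by
  obtain ⟨n, rfl⟩ := h
  obtain ⟨x, d, rfl⟩ := List.exists_cons_of_ne_nil hd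
  rfl

lemma EdgeCond.take_one_eq (hF : NForest F) (hO : O ⊆ RootsSet F)
    {E : List ℕ → List ℕ → Prop} (hE : EdgeCond F O E) {d e : List ℕ}
    (hd : d ∈ F) (he : e ∈ F) (hdr : d ∉ RootsSet F) (her : e ∉ RootsSet F)
    (hde : E d e) : e.take 1 = d.take 1 := by
  rcases hE d e hd he hde with ⟨hdr', -⟩ | hdO | heO | rfl | hchild | hchild
  · exact absurd hdr' hdr
  · exact absurd (hO hdO) hdr
  · exact absurd (hO heO) her
  · rfl
  · exact hchild.take_one_eq (hF.1 d hd)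
  · exact (hchild.take_one_eq (hF.1 e he)).symm

lemma EdgeCond.take_one_eq_of_chain (hF : NForest F) (hO : O ⊆ RootsSet F)
    {E : List ℕ → List ℕ → Prop} (hE : EdgeCond F O E) {ρ : ℕ → List ℕ} {a b : ℕ}
    (hpath : ∀ i, a ≤ i → i < b → E (ρ i) (ρ (i + 1)))
    (hmem : ∀ i, a ≤ i → i ≤ b → ρ i ∈ F)
    (hnr : ∀ i, a ≤ i → i ≤ b → ρ i ∉ RootsSet F) :
    ∀ i, a ≤ i → i ≤ b → (ρ i).take 1 = (ρ a).take 1 := by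
  intro i hai
  induction i, hai using Nat.le_induction with
  | base => exact fun _ => rfl
  | succ i hai ih =>
    intro hib
    rw [← ih (by omega)]
    exact hE.take_one_eq hF hO (hmem i hai (by omega)) (hmem (i + 1) (by omega) hib)
      (hnr i hai (by omega)) (hnr (i + 1) (by omega) hib) (hpath i hai hib)

lemma EdgeCond.exists_root_strictPrefix_of_chain (hF : NForest F) (hO : O ⊆ RootsSet F)
    {E : List ℕ → List ℕ → Prop} (hE : EdgeCond F O E) {ρ : ℕ → List ℕ} {a b : ℕ}
    (hab : a ≤ b) (hpath : ∀ i, a ≤ i → i < b → E (ρ i) (ρ (i + 1)))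
    (hmem : ∀ i, a ≤ i → i ≤ b → ρ i ∈ F)
    (hnr : ∀ i, a ≤ i → i ≤ b → ρ i ∉ RootsSet F) :
    ∃ r ∈ RootsSet F, ∀ i, a ≤ i → i ≤ b → StrictPrefix r (ρ i) := by
  refine ⟨(ρ a).take 1, hF.take_one_mem_rootsSet (hmem a le_rfl hab), fun i hai hib => ?_⟩
  rw [← hE.take_one_eq_of_chain hF hO hpath hmem hnr i hai hib]
  exact hF.strictPrefix_take_one (hmem i hai hib) (hnr i hai hib)

end QuasiForest

theorem stmt16_general {A : Type}
    (F O : Set (List ℕ)) (edge : List ℕ → A → List ℕ → Prop)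
    (hF : NForest F) (hO : O ⊆ RootsSet F)
    (hE : EdgeCond F O (fun d e => ∃ σ, edge d σ e))
    (k : ℕ) (hk : 1 ≤ k) (ρ : ℕ → List ℕ) (lab : ℕ → A)
    (hmem : ∀ i < k, ρ i ∈ F)
    (hstep : ∀ i, i + 1 < k → edge (ρ i) (lab i) (ρ (i + 1)))
    (hstart : ρ 0 ∈ RootsSet F) :
    ∃ m : ℕ, ∃ idx : Fin (m + 1) → ℕ,
      StrictMono idx ∧ idx 0 = 0 ∧ (∀ j, idx j ≤ k - 1) ∧
      (∀ i < k, (ρ i ∈ RootsSet F ↔ ∃ j, idx j = i)) ∧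
      (∀ j : Fin m, ∀ i, idx j.castSucc < i → i < idx j.succ →
        ρ i ∉ RootsSet F) ∧
      (idx (Fin.last m) < k - 1 →
        ∃ a ∈ RootsSet F, ∀ i, idx (Fin.last m) < i → i < k →
          StrictPrefix a (ρ i)) := by
  classical
  set s := (Finset.range k).filter (fun i => ρ i ∈ RootsSet F)
  have hs : ∀ {i}, i ∈ s ↔ i < k ∧ ρ i ∈ RootsSet F := by simp [s]
  have h0s : 0 ∈ s := hs.2 ⟨hk, hstart⟩
  have hcard : s.card = s.card - 1 + 1 :=
    (Nat.succ_pred_eq_of_pos (Finset.card_pos.2 ⟨0, h0s⟩)).symm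
  set idx := s.orderEmbOfFin hcard
  have hrange : ∀ {i}, i ∈ Set.range idx ↔ i ∈ s := by
    simp only [idx, Finset.range_orderEmbOfFin, Finset.mem_coe, implies_true]
  have hroot : ∀ {i}, ρ i ∈ RootsSet F → i < k → i ∈ Set.range idx :=
    fun hr hi => hrange.2 (hs.2 ⟨hi, hr⟩)
  refine ⟨_, idx, idx.strictMono, ?_, fun j => ?_, fun i hi => ?_, fun j i hlo hhi hr => ?_,
    fun hlast => ?_⟩
  · exact Nat.eq_zero_of_le_zero ((Finset.orderEmbOfFin_zero hcard _).trans_le (s.min'_le 0 h0s))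
  · exact Nat.le_pred_of_lt (hs.1 (s.orderEmbOfFin_mem hcard j)).1
  · exact ⟨fun hr => hroot hr hi,
      fun ⟨j, hj⟩ => (hs.1 (hj ▸ s.orderEmbOfFin_mem hcard j)).2⟩
  · exact idx.strictMono.notMem_range_of_lt_of_lt j hlo hhi
      (hroot hr (hhi.trans (hs.1 (s.orderEmbOfFin_mem hcard _)).1))
  · obtain ⟨a, ha, hpre⟩ := hE.exists_root_strictPrefix_of_chain hF hO hlast
      (fun i _ hi => ⟨lab i, hstep i (by omega)⟩) (fun i _ hi => hmem i (by omega))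
      (fun i hi hik hr => idx.monotone.notMem_range_of_last_lt hi (hroot hr (by omega)))
    exact ⟨a, ha, fun i hlo hi => hpre i hlo (by omega)⟩

/-- Shortening direction of Lemma 11: a path `ρ` of length `k` from a root,
with labels `lab` realising the NFA `δ` along a run `st`, can be cut at the
subsequence `idx` of its root positions; each consecutive segment has unnamed
interior (and realises the NFA between the run states at the cut points), and
any trailing segment after the last root position is an inner path contained
in the subtree of a single root. -/
theorem stmt16 {A Q : Type}
    (F O : Set (List ℕ)) (edge : List ℕ → A → List ℕ → Prop)
    (δ : Q → A → Q → Prop)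
    (hF : NForest F) (hO : O ⊆ RootsSet F)
    (hE : EdgeCond F O (fun d e => ∃ σ, edge d σ e))
    (k : ℕ) (hk : 1 ≤ k) (ρ : ℕ → List ℕ) (lab : ℕ → A) (st : ℕ → Q)
    (q q' : Q) (hq : st 0 = q) (hq' : st (k - 1) = q')
    (hmem : ∀ i < k, ρ i ∈ F)
    (hstep : ∀ i, i + 1 < k → edge (ρ i) (lab i) (ρ (i + 1)))
    (hrun : ∀ i, i + 1 < k → δ (st i) (lab i) (st (i + 1)))
    (hstart : ρ 0 ∈ RootsSet F) :
    ∃ m : ℕ, ∃ idx : Fin (m + 1) → ℕ,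
      StrictMono idx ∧ idx 0 = 0 ∧ (∀ j, idx j ≤ k - 1) ∧
      (∀ i < k, (ρ i ∈ RootsSet F ↔ ∃ j, idx j = i)) ∧
      (∀ j : Fin m, ∀ i, idx j.castSucc < i → i < idx j.succ →
        ρ i ∉ RootsSet F) ∧
      (idx (Fin.last m) < k - 1 →
        ∃ a ∈ RootsSet F, ∀ i, idx (Fin.last m) < i → i < k →
          StrictPrefix a (ρ i)) :=
  stmt16_general F O edge hF hO hE k hk ρ lab hmem hstep hstart
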